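/- Let r be a landmark, B a batch update transforming G into G', and v a vertex with P_G(r,v) ≠ P_{G'}(r,v). Then there is an update edge (a,b) ∈ B with d_G(r,a) + 1 ≤ d_G(r,b) (i.e., b is the anchor) and d_G(r,v) ≥ (d_G(r,a) + 1) + d_{G'}(b,v). -/

import Mathlib

/-!
Write `d = d_G(r, ·)` and follow a walk towards `v` while keeping a natural number `k` with
`d(x) ≤ k` at the current vertex `x` and `k + (remaining length) ≤ d(v)`.

Along a walk of `G'`, an edge of `G` preserves this invariant. An inserted edge `(x, w)` either
has `w` as its anchor, and the remaining walk bounds `d_{G'}(w, v)`, or satisfies `d(w) ≤ d(x)`;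
then the rest of the walk is too short to be a walk of `G`, so it still contains an update edge.

Along a walk of `G` the invariant forces the walk to be a geodesic, and the last edge of it that is
missing from `G'` is a deleted edge whose endpoint `w` is an anchor, with the rest of the walk
lying in `G'` and bounding `d_{G'}(w, v)`.

If `v` is affected, either `d_G(r, v) ≠ d_{G'}(r, v)`, and a shortest walk in the graph with
the smaller distance is not a walk of the other graph, or some shortest path of one graph is not a
walk of the other; in each case one of the two walks above starts at `r` with `k = 0`.
-/

open scoped Classical

variable {V : Type*}

namespace BatchHL

/-- `l` is a walk in `G` from `r` to `v`, given as its (nonempty) list of visited vertices. -/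
def IsWalk (G : SimpleGraph V) (r v : V) (l : List V) : Prop :=
  l ≠ [] ∧ l.head? = some r ∧ l.getLast? = some v ∧ l.Chain' G.Adj

/-- The length (number of edges) of a walk given as a list of vertices. -/
def len (l : List V) : ℕ := l.length - 1

/-- The walk `l` passes through the (undirected) edge `(a, b)`. -/
def Passes (l : List V) (a b : V) : Prop :=
  (a, b) ∈ l.zip l.tail ∨ (b, a) ∈ l.zip l.tail

/-- `P_G(r,v)`: the set of all shortest paths between `r` and `v` in `G`. -/
def SPaths (G : SimpleGraph V) (r v : V) : Set (List V) :=
  {l | IsWalk G r v l ∧ ∀ l', IsWalk G r v l' → l.length ≤ l'.length}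

/-- `(a,b)` is an edge deleted by the batch update turning `G` into `G'`. -/
def DeletedEdge (G G' : SimpleGraph V) (a b : V) : Prop := G.Adj a b ∧ ¬ G'.Adj a b

/-- `(a,b)` is an edge inserted by the batch update turning `G` into `G'`. -/
def InsertedEdge (G G' : SimpleGraph V) (a b : V) : Prop := G'.Adj a b ∧ ¬ G.Adj a b

/-- `(a,b)` is an edge of the batch update `B` turning `G` into `G'`. -/
def UpdatedEdge (G G' : SimpleGraph V) (a b : V) : Prop :=
  InsertedEdge G G' a b ∨ DeletedEdge G G' a b

/-- The walk `l` passes through a deleted edge. -/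
def PassesDeleted (G G' : SimpleGraph V) (l : List V) : Prop :=
  ∃ a b, DeletedEdge G G' a b ∧ Passes l a b

/-- The walk `l` passes through an inserted edge. -/
def PassesInserted (G G' : SimpleGraph V) (l : List V) : Prop :=
  ∃ a b, InsertedEdge G G' a b ∧ Passes l a b

/-- `v` is affected w.r.t. landmark `r` iff the set of shortest paths changes. -/
def Affected (G G' : SimpleGraph V) (r v : V) : Prop := SPaths G r v ≠ SPaths G' r v

/-- A composite path from `r` to `v`: a prefix lying in `G` followed by a suffix lying in `G'`. -/
def IsComposite (G G' : SimpleGraph V) (r v : V) (l : List V) : Prop :=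
  ∃ w l₁ l₂, IsWalk G r w l₁ ∧ IsWalk G' w v l₂ ∧ l = l₁ ++ l₂.tail

/-- A significant composite path: a composite path whose `G`-prefix passes through a deleted
edge and whose `G'`-suffix passes through an inserted edge. -/
def IsSigComposite (G G' : SimpleGraph V) (r v : V) (l : List V) : Prop :=
  ∃ w l₁ l₂, IsWalk G r w l₁ ∧ IsWalk G' w v l₂ ∧ l = l₁ ++ l₂.tail ∧
    PassesDeleted G G' l₁ ∧ PassesInserted G G' l₂

/-- `v` is composite-path affected w.r.t. `r`. -/
def CPAffected (G G' : SimpleGraph V) (r v : V) : Prop :=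
  Affected G G' r v ∨ ∃ l, IsSigComposite G G' r v l ∧ (len l : ℕ∞) ≤ G.edist r v

/-- A distance labelling: each label entry `(r, δ) ∈ L v` satisfies `δ = d_G(r,v)`. -/
def IsLabelling (G : SimpleGraph V) (L : V → Set (V × ℕ∞)) : Prop :=
  ∀ v r δ, (r, δ) ∈ L v → δ = G.edist r v

/-- A 2-hop cover labelling: a distance labelling such that every pair `s, t` has a common
hub `r` lying on a shortest path between `s` and `t`. -/
def Is2HopCover (G : SimpleGraph V) (L : V → Set (V × ℕ∞)) : Prop :=
  IsLabelling G L ∧ ∀ s t : V, ∃ r, (r, G.edist r s) ∈ L s ∧ (r, G.edist r t) ∈ L t ∧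
    G.edist s r + G.edist r t = G.edist s t

/-- A highway cover labelling `Γ = (H, L)` over `G` with landmarks `R`.  The highway
distances `δ_H(r,r_i)` are by definition the graph distances `d_G(r,r_i)`. -/
def IsHighwayCover (G : SimpleGraph V) (R : Set V) (L : V → Set (V × ℕ∞)) : Prop :=
  (∀ v r δ, (r, δ) ∈ L v → r ∈ R ∧ δ = G.edist r v) ∧
  ∀ v, v ∉ R → ∀ r ∈ R,
    G.edist r v = sInf {x | ∃ ri δ, (ri, δ) ∈ L v ∧ x = δ + G.edist r ri}

/-- The landmark length / landmark distance values: `⊤` for "no path", otherwise a pair of a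
length and a landmark flag (a `Prop`). -/
abbrev LLen := WithTop (ℕ × Prop)

/-- Lexicographic order on landmark lengths, with flag ordering `True < False`
(i.e. `x ≤ y` at equal length iff `y`'s flag implies `x`'s flag). -/
def llLe : LLen → LLen → Prop
  | _, none => True
  | none, some _ => False
  | some a, some b => a.1 < b.1 ∨ (a.1 = b.1 ∧ (b.2 → a.2))

/-- Strict lexicographic order on landmark lengths. -/
def llLt (x y : LLen) : Prop := llLe x y ∧ ¬ llLe y x

/-- The extension operator `⊕`: `(d,l) ⊕ w = (d+1, True)` if `w ∈ R∖{r}`, else `(d+1, l)`. -/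
def oplus (R : Set V) (r : V) : LLen → V → LLen
  | none, _ => none
  | some a, w => some (a.1 + 1, (w ∈ R ∧ w ≠ r) ∨ a.2)

/-- The landmark length `lml(l)` of a walk `l` starting at `r`: its length together with the
flag recording whether it passes through a landmark other than `r`. -/
def lmLen (R : Set V) (r : V) (l : List V) : LLen :=
  some (len l, ∃ w ∈ l, w ∈ R ∧ w ≠ r)

/-- The landmark distance `d^L_G(r,v)`: the lexicographically minimal landmark length of a
walk from `r` to `v` (with `True < False` on flags), `⊤` if there is none.  Explicitly, its
length component is the minimal walk length and its flag holds iff some walk of minimal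
length passes through a landmark other than `r`. -/
noncomputable def lmDist (G : SimpleGraph V) (R : Set V) (r v : V) : LLen :=
  if ∃ l, IsWalk G r v l then
    some (sInf {n | ∃ l, IsWalk G r v l ∧ len l = n},
      ∃ l, IsWalk G r v l ∧ len l = sInf {n | ∃ l', IsWalk G r v l' ∧ len l' = n} ∧
        ∃ w ∈ l, w ∈ R ∧ w ≠ r)
  else ⊤

/-- Order on extended landmark lengths `(landmark length, deletion flag)`, lexicographic with
`True < False` on the deletion flag. -/
def ellLe (x y : LLen × Prop) : Prop := llLt x.1 y.1 ∨ (x.1 = y.1 ∧ (y.2 → x.2))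

/-- Strict order on extended landmark lengths. -/
def ellLt (x y : LLen × Prop) : Prop := ellLe x y ∧ ¬ ellLe y x

/-- `β(r,v) = (d^L_G(r,v), True)`. -/
noncomputable def beta (G : SimpleGraph V) (R : Set V) (r v : V) : LLen × Prop :=
  (lmDist G R r v, True)

/-- The distance bound `d_bou(u, S)` of `u` w.r.t. `S` in `G'`. -/
noncomputable def dbou (G' : SimpleGraph V) (r : V) (S : Set V) (u : V) : ℕ∞ :=
  ⨅ (w : V) (_ : G'.Adj u w ∧ w ∉ S), (G'.edist r w + 1)

/-- The set `{ d^L_{G'}(r,w) ⊕ v | w ∈ N_{G'}(v) ∖ S }`, whose lexicographic minimum is the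
landmark distance bound `d^L_bou(v,S)`. -/
noncomputable def lmBouSet (G' : SimpleGraph V) (R : Set V) (r v : V) (S : Set V) :
    Set LLen :=
  {x | ∃ w, G'.Adj v w ∧ w ∉ S ∧ x = oplus R r (lmDist G' R r w) v}

/-- The subgraph `G[V ∖ R]` obtained by removing all landmarks (landmarks become isolated). -/
def removeLandmarks (G : SimpleGraph V) (R : Set V) : SimpleGraph V where
  Adj u w := G.Adj u w ∧ u ∉ R ∧ w ∉ R
  symm := ⟨fun u w ⟨h, hu, hw⟩ => ⟨h.symm, hw, hu⟩⟩
  loopless := ⟨fun u ⟨h, _, _⟩ => G.loopless.irrefl u h⟩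

end BatchHL

namespace SimpleGraph

variable {G : SimpleGraph V} {r v x w : V}

theorem Adj.edist_le_edist_add_one (h : G.Adj x w) : G.edist r w ≤ G.edist r x + 1 :=
  G.edist_triangle.trans_eq (by rw [edist_eq_one_iff_adj.mpr h])

theorem Walk.isChain_support_cons_iff {R : V → V → Prop} (hxw : G.Adj x w) (q : G.Walk w v) :
    (q.cons hxw).support.IsChain R ↔ R x w ∧ q.support.IsChain R := by
  rw [support_cons, ← q.cons_tail_support, List.isChain_cons_cons, q.cons_tail_support]

end SimpleGraph

namespace BatchHL

open SimpleGraph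

def HasAnchoredUpdate (G G' : SimpleGraph V) (r v : V) : Prop :=
  ∃ a b, UpdatedEdge G G' a b ∧ G.edist r a + 1 ≤ G.edist r b ∧
    G.edist r a + 1 + G'.edist b v ≤ G.edist r v

section

variable {G G' : SimpleGraph V} {r v : V} {l : List V}

theorem isWalk_iff_exists_walk : IsWalk G r v l ↔ ∃ p : G.Walk r v, p.support = l := by
  constructor
  · rintro ⟨hne, hhead, hlast, hchain : l.IsChain G.Adj⟩
    refine ⟨(Walk.ofSupport l hne hchain).copy ?_ ?_, ?_⟩
    · simpa [List.head?_eq_some_head hne] using hhead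
    · simpa [List.getLast?_eq_some_getLast hne] using hlast
    · rw [Walk.support_copy, Walk.support_ofSupport]
  · rintro ⟨p, rfl⟩
    refine ⟨p.support_ne_nil, ?_, ?_, p.isChain_adj_support⟩
    · rw [List.head?_eq_some_head p.support_ne_nil, p.head_support]
    · rw [List.getLast?_eq_some_getLast p.support_ne_nil, p.getLast_support]

theorem isWalk_support {x y : V} (p : G.Walk x y) : IsWalk G x y p.support :=
  isWalk_iff_exists_walk.mpr ⟨p, rfl⟩

theorem len_support {x y : V} (p : G.Walk x y) : len p.support = p.length := by
  simp [len]

theorem IsWalk.length_eq (h : IsWalk G r v l) : l.length = len l + 1 := by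
  have := List.length_pos_iff.mpr h.1
  unfold len
  omega

theorem IsWalk.edist_le_len (h : IsWalk G r v l) : G.edist r v ≤ len l := by
  obtain ⟨p, rfl⟩ := isWalk_iff_exists_walk.mp h
  rw [len_support]
  exact p.edist_le

theorem exists_isWalk_len_eq_edist (h : G.edist r v ≠ ⊤) :
    ∃ l, IsWalk G r v l ∧ (len l : ℕ∞) = G.edist r v := by
  obtain ⟨p, hp⟩ := exists_walk_of_edist_ne_top h
  exact ⟨p.support, isWalk_support p, by rw [len_support, hp]⟩

theorem mem_sPaths_iff :
    l ∈ SPaths G r v ↔ IsWalk G r v l ∧ (len l : ℕ∞) = G.edist r v := by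
  constructor
  · rintro ⟨hl, hmin⟩
    refine ⟨hl, le_antisymm ?_ hl.edist_le_len⟩
    by_cases htop : G.edist r v = ⊤
    · exact htop ▸ le_top
    obtain ⟨l', hl', hlen'⟩ := exists_isWalk_len_eq_edist htop
    have hshorter := hmin l' hl'
    rw [hl.length_eq, hl'.length_eq] at hshorter
    calc (len l : ℕ∞) ≤ len l' := by exact_mod_cast Nat.le_of_succ_le_succ hshorter
      _ = G.edist r v := hlen'
  · rintro ⟨hl, hlen⟩
    refine ⟨hl, fun l' hl' => ?_⟩
    have hle : (len l : ℕ∞) ≤ len l' := hlen ▸ hl'.edist_le_len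
    rw [hl.length_eq, hl'.length_eq]
    exact_mod_cast Nat.succ_le_succ (by exact_mod_cast hle)

theorem IsWalk.of_isChain (h : IsWalk G' r v l) (hchain : l.IsChain G.Adj) : IsWalk G r v l :=
  ⟨h.1, h.2.1, h.2.2.1, hchain⟩

theorem edist_le_length_of_isChain {x y : V} (p : G'.Walk x y) (h : p.support.IsChain G.Adj) :
    G.edist x y ≤ p.length := by
  simpa only [len_support] using ((isWalk_support p).of_isChain h).edist_le_len

theorem isChain_or_hasAnchoredUpdate_of_newWalk {x : V} (p : G'.Walk x v) (k : ℕ)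
    (hx : G.edist r x ≤ k) (hp : ((k + p.length : ℕ) : ℕ∞) ≤ G.edist r v) :
    p.support.IsChain G.Adj ∨ HasAnchoredUpdate G G' r v := by
  induction p generalizing k with
  | nil => exact Or.inl (List.isChain_singleton _)
  | @cons x w v hxw q ih =>
    rw [Walk.isChain_support_cons_iff]
    by_cases hG : G.Adj x w
    · have hw : G.edist r w ≤ (k + 1 : ℕ) := by
        push_cast
        exact hG.edist_le_edist_add_one.trans (add_le_add_left hx 1)
      refine (ih (k + 1) hw ?_).imp_left (⟨hG, ·⟩)
      convert hp using 2
      rw [Walk.length_cons]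
      omega
    by_cases hanchor : G.edist r x + 1 ≤ G.edist r w
    · refine Or.inr ⟨x, w, Or.inl ⟨hxw, hG⟩, hanchor, ?_⟩
      calc G.edist r x + 1 + G'.edist w v ≤ k + 1 + q.length :=
            add_le_add (add_le_add_left hx 1) q.edist_le
        _ = ((k + (q.cons hxw).length : ℕ) : ℕ∞) := by push_cast [Walk.length_cons]; ring
        _ ≤ G.edist r v := hp
    -- `(x, w)` is an inserted shortcut: the rest of the walk is now too short to lie in `G`
    have hxk : G.edist r x ≠ ⊤ := ne_top_of_le_ne_top (ENat.natCast_ne_top k) hx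
    have hw : G.edist r w ≤ k :=
      ((ENat.lt_add_one_iff hxk).mp (not_le.mp hanchor)).trans hx
    have hq : ((k + q.length : ℕ) : ℕ∞) ≤ G.edist r v :=
      le_trans (by simp [Walk.length_cons]) hp
    refine (ih k hw hq).imp (fun hchain => absurd hp (not_le.mpr ?_)) id
    calc G.edist r v ≤ G.edist r w + q.length :=
          G.edist_triangle.trans (add_le_add_right (edist_le_length_of_isChain q hchain) _)
      _ ≤ k + q.length := add_le_add_left hw _
      _ < ((k + (q.cons hxw).length : ℕ) : ℕ∞) := by
          rw [Walk.length_cons]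
          exact_mod_cast (by omega)

theorem isChain_or_hasAnchoredUpdate_of_oldWalk {x : V} (p : G.Walk x v) (k : ℕ)
    (hx : G.edist r x ≤ k) (hp : ((k + p.length : ℕ) : ℕ∞) ≤ G.edist r v) :
    p.support.IsChain G'.Adj ∨ HasAnchoredUpdate G G' r v := by
  induction p generalizing k with
  | nil => exact Or.inl (List.isChain_singleton _)
  | @cons x w v hxw q ih =>
    rw [Walk.isChain_support_cons_iff]
    have hw : G.edist r w ≤ (k + 1 : ℕ) := by
      push_cast
      exact hxw.edist_le_edist_add_one.trans (add_le_add_left hx 1)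
    have hq : ((k + 1 + q.length : ℕ) : ℕ∞) ≤ G.edist r v := by
      convert hp using 2
      rw [Walk.length_cons]
      omega
    refine (ih (k + 1) hw hq).elim (fun hchain => ?_) Or.inr
    by_cases hG' : G'.Adj x w
    · exact Or.inl ⟨hG', hchain⟩
    have hkw : ((k + 1 : ℕ) : ℕ∞) ≤ G.edist r w := by
      refine (ENat.add_le_add_iff_right (ENat.natCast_ne_top q.length)).mp ?_
      calc ((k + 1 : ℕ) : ℕ∞) + q.length = ((k + 1 + q.length : ℕ) : ℕ∞) := by
            push_cast; rfl
        _ ≤ G.edist r v := hq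
        _ ≤ G.edist r w + q.length := G.edist_triangle.trans (add_le_add_right q.edist_le _)
    refine Or.inr ⟨x, w, Or.inr ⟨hxw, hG'⟩,
      (add_le_add_left hx 1).trans (by exact_mod_cast hkw), ?_⟩
    calc G.edist r x + 1 + G'.edist w v ≤ k + 1 + q.length :=
          add_le_add (add_le_add_left hx 1) (edist_le_length_of_isChain q hchain)
      _ = ((k + 1 + q.length : ℕ) : ℕ∞) := by push_cast; rfl
      _ ≤ G.edist r v := hq

theorem hasAnchoredUpdate_of_isWalk_new (hl : IsWalk G' r v l)
    (hlen : (len l : ℕ∞) ≤ G.edist r v) (hold : ¬IsWalk G r v l) :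
    HasAnchoredUpdate G G' r v := by
  obtain ⟨p, rfl⟩ := isWalk_iff_exists_walk.mp hl
  refine (isChain_or_hasAnchoredUpdate_of_newWalk p 0 (by simp) ?_).resolve_left
    fun hchain => hold (hl.of_isChain hchain)
  simpa [len_support] using hlen

theorem hasAnchoredUpdate_of_isWalk_old (hl : IsWalk G r v l)
    (hlen : (len l : ℕ∞) ≤ G.edist r v) (hnew : ¬IsWalk G' r v l) :
    HasAnchoredUpdate G G' r v := by
  obtain ⟨p, rfl⟩ := isWalk_iff_exists_walk.mp hl
  refine (isChain_or_hasAnchoredUpdate_of_oldWalk p 0 (by simp) ?_).resolve_left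
    fun hchain => hnew (hl.of_isChain hchain)
  simpa [len_support] using hlen

theorem hasAnchoredUpdate_of_edist_lt (h : G'.edist r v < G.edist r v) :
    HasAnchoredUpdate G G' r v := by
  obtain ⟨l, hl, hlen⟩ := exists_isWalk_len_eq_edist h.ne_top
  exact hasAnchoredUpdate_of_isWalk_new hl (hlen ▸ h.le)
    fun hold => (hold.edist_le_len.trans_eq hlen).not_gt h

theorem hasAnchoredUpdate_of_lt_edist (h : G.edist r v < G'.edist r v) :
    HasAnchoredUpdate G G' r v := by
  obtain ⟨l, hl, hlen⟩ := exists_isWalk_len_eq_edist h.ne_top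
  exact hasAnchoredUpdate_of_isWalk_old hl hlen.le
    fun hnew => (hnew.edist_le_len.trans_eq hlen).not_gt h

end

/-- **shared pattern, Eq. 2.** If `v` is affected w.r.t. `r` by the batch
update turning `G` into `G'`, then there is an update edge `(a,b)` with
`d_G(r,a) + 1 ≤ d_G(r,b)` (so `b` is its anchor) such that
`d_G(r,v) ≥ (d_G(r,a) + 1) + d_{G'}(b,v)`. -/
theorem shared_pattern (G G' : SimpleGraph V) (r v : V)
    (h : Affected G G' r v) :
    ∃ a b, UpdatedEdge G G' a b ∧
      G.edist r a + 1 ≤ G.edist r b ∧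
      G.edist r a + 1 + G'.edist b v ≤ G.edist r v := by
  rcases lt_trichotomy (G'.edist r v) (G.edist r v) with hlt | heq | hgt
  · exact hasAnchoredUpdate_of_edist_lt hlt
  · obtain ⟨l, hl⟩ : ∃ l, ¬(l ∈ SPaths G r v ↔ l ∈ SPaths G' r v) := by
      by_contra! hsame
      exact h (Set.ext hsame)
    simp only [mem_sPaths_iff, heq] at hl
    have hlen : (len l : ℕ∞) = G.edist r v := by
      by_contra hne
      simp [hne] at hl
    simp only [hlen, and_true] at hl
    by_cases hold : IsWalk G r v l
    · exact hasAnchoredUpdate_of_isWalk_old hold hlen.le (by tauto)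
    · exact hasAnchoredUpdate_of_isWalk_new (by tauto) hlen.le hold
  · exact hasAnchoredUpdate_of_lt_edist hgt

end BatchHL
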